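/- Let S be a set and f : Set S → Set S monotone. Then the least fixpoint of f equals the union of all subsets of S that are well-supported for f: μf = ⋃{X ⊆ S | X admits a well-founded support ordering for f}. -/

import Mathlib

/-- `(X, r)` is a support ordering for `f`. -/
def IsSupportOrdering {S : Type*} (f : Set S → Set S) (X : Set S) (r : S → S → Prop) : Prop :=
  ∀ x ∈ X, x ∈ f {x' ∈ X | r x' x}

/-- `X` is well-supported for `f`: it admits a well-founded support ordering. -/
def IsWellSupported {S : Type*} (f : Set S → Set S) (X : Set S) : Prop :=
  ∃ r : S → S → Prop,
    (∀ x y, r x y → x ∈ X ∧ y ∈ X) ∧ WellFounded r ∧ IsSupportOrdering f X r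

/-!
A well-supported set lies in every prefixed point `Y` (`f Y ⊆ Y`), by well-founded induction
along its support ordering, hence in `μf`. Conversely `μf` is itself well-supported: rank each
of its elements by the first stage of the transfinite iteration `⊥, f ⊥, …` whose image under `f`
contains it, and order elements by rank.
-/

open OrdinalApprox

section

variable {S : Type*}

theorem IsWellSupported.subset_of_map_subset {f : Set S → Set S} (hf : Monotone f) {X Y : Set S}
    (hX : IsWellSupported f X) (hY : f Y ⊆ Y) : X ⊆ Y := by
  obtain ⟨r, -, hwf, hsupp⟩ := hX
  intro x
  induction x using hwf.induction with
  | _ x ih => exact fun hx => hY (hf (fun y hy => ih y hy.2 hy.1) (hsupp x hx))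

theorem IsWellSupported.subset_lfp {f : Set S → Set S} (hf : Monotone f) {X : Set S}
    (hX : IsWellSupported f X) : X ⊆ OrderHom.lfp ⟨f, hf⟩ :=
  OrderHom.le_lfp _ fun _ hY => hX.subset_of_map_subset hf hY

theorem isWellSupported_of_rank {α : Type*} [Preorder α] [WellFoundedLT α] {f : Set S → Set S}
    {X : Set S} (ρ : S → α) (h : ∀ x ∈ X, x ∈ f {y ∈ X | ρ y < ρ x}) : IsWellSupported f X := by
  refine ⟨fun y x => y ∈ X ∧ x ∈ X ∧ ρ y < ρ x, fun _ _ hr => ⟨hr.1, hr.2.1⟩,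
    Subrelation.wf (fun hr => hr.2.2) (InvImage.wf ρ wellFounded_lt), fun x hx => ?_⟩
  convert h x hx using 2
  simp [hx]

namespace OrdinalApprox

theorem mem_lfpApprox_bot_iff {F : Set S →o Set S} {a : Ordinal} {x : S} :
    x ∈ lfpApprox F ⊥ a ↔ ∃ b < a, x ∈ F (lfpApprox F ⊥ b) := by
  rw [lfpApprox]
  simp

noncomputable def lfpRank (F : Set S →o Set S) (x : S) : Ordinal :=
  sInf {b | x ∈ F (lfpApprox F ⊥ b)}

theorem mem_map_lfpApprox_lfpRank {F : Set S →o Set S} {x : S} (hx : x ∈ F.lfp) :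
    x ∈ F (lfpApprox F ⊥ (lfpRank F x)) := by
  rw [← lfpApprox_ord_eq_lfp, mem_lfpApprox_bot_iff] at hx
  obtain ⟨b, -, hb⟩ := hx
  exact csInf_mem (s := {b | x ∈ F (lfpApprox F ⊥ b)}) ⟨b, hb⟩

theorem lfpRank_lt_of_mem_lfpApprox {F : Set S →o Set S} {x y : S}
    (hy : y ∈ lfpApprox F ⊥ (lfpRank F x)) : lfpRank F y < lfpRank F x := by
  obtain ⟨b, hb, hyb⟩ := mem_lfpApprox_bot_iff.mp hy
  exact (csInf_le' (s := {b | y ∈ F (lfpApprox F ⊥ b)}) hyb).trans_lt hb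

end OrdinalApprox

theorem isWellSupported_lfp (F : Set S →o Set S) : IsWellSupported F F.lfp := by
  refine isWellSupported_of_rank (lfpRank F) fun x hx => F.mono (fun y hy => ?_)
    (mem_map_lfpApprox_lfpRank hx)
  exact ⟨lfpApprox_le_of_mem_fixedPoints F F.isFixedPt_lfp bot_le _ hy,
    lfpRank_lt_of_mem_lfpApprox hy⟩

end

theorem lfp_eq_union_wellSupported {S : Type*} (f : Set S → Set S) (hf : Monotone f) :
    OrderHom.lfp ⟨f, hf⟩ = sSup {X : Set S | IsWellSupported f X} :=
  le_antisymm (le_sSup (isWellSupported_lfp ⟨f, hf⟩))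
    (sSup_le fun _ hX => hX.subset_lfp hf)
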